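/- For every n ≥ 1 and every function f : V_{n−1} → ℝ, the minimum of Q_n(g) := Σ_{{x,y} : x ∼_n y} (g(x) − g(y))² over all functions g : V_n → ℝ with g|_{V_{n−1}} = f is attained and equals (3/5)·Q_{n−1}(f), where Q_{n−1}(f) = Σ_{{x,y} : x ∼_{n−1} y} (f(x) − f(y))². Equivalently, with the scaling constants c_n = (5/3)^n, the family of energy forms 𝓔_n(f) = c_n·Q_n(f) is consistent: 𝓔_{n−1}(f) = min { 𝓔_n(g) : g : V_n → ℝ, g|_{V_{n−1}} = f }. -/
import Mathlib


open Set

/-- The first contracting similarity generating the Sierpiński triangle. -/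
noncomputable def T1 (p : ℝ × ℝ) : ℝ × ℝ := (p.1 / 2, p.2 / 2)

/-- The second contracting similarity generating the Sierpiński triangle. -/
noncomputable def T2 (p : ℝ × ℝ) : ℝ × ℝ := (p.1 / 2 + 1 / 2, p.2 / 2)

/-- The third contracting similarity generating the Sierpiński triangle. -/
noncomputable def T3 (p : ℝ × ℝ) : ℝ × ℝ := (p.1 / 2 + 1 / 4, p.2 / 2 + Real.sqrt 3 / 4)

/-- The three similarities indexed by `Fin 3`. -/
noncomputable def Tm : Fin 3 → ℝ × ℝ → ℝ × ℝ := ![T1, T2, T3]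

/-- The vertex sets `V n` of the approximating graphs `X n`. -/
noncomputable def V : ℕ → Set (ℝ × ℝ)
  | 0 => {(0, 0), (1, 0), (1 / 2, Real.sqrt 3 / 2)}
  | n + 1 => T1 '' V n ∪ T2 '' V n ∪ T3 '' V n

/-- `Cell n w = T_{w 0} ∘ ⋯ ∘ T_{w (n-1)} (V 0)`, a level-`n` cell. -/
noncomputable def Cell : (n : ℕ) → (Fin n → Fin 3) → Set (ℝ × ℝ)
  | 0, _ => V 0
  | n + 1, w => Tm (w 0) '' Cell n (w ∘ Fin.succ)

/-- Adjacency in the graph `X n`: `x ≠ y` and `x, y` lie in a common level-`n`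
cell `(T_{i₁} ∘ ⋯ ∘ T_{i_n})(V 0)`. -/
def Adj (n : ℕ) (x y : ℝ × ℝ) : Prop :=
  x ≠ y ∧ ∃ w : Fin n → Fin 3, x ∈ Cell n w ∧ y ∈ Cell n w

/-- The (unnormalized) graph energy `Q n g = Σ_{{x,y} : x ∼ₙ y} (g x - g y)²`,
written as half the sum over ordered adjacent pairs. -/
noncomputable def Q (n : ℕ) (g : ℝ × ℝ → ℝ) : ℝ :=
  (1 / 2) * ∑' p : {p : (ℝ × ℝ) × (ℝ × ℝ) // Adj n p.1 p.2},
    (g p.val.1 - g p.val.2) ^ 2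

/-- The self-similar energy forms `𝓔 n g = (5/3)^n · Q n g`. -/
noncomputable def En (n : ℕ) (g : ℝ × ℝ → ℝ) : ℝ := (5 / 3 : ℝ) ^ n * Q n g

noncomputable section

namespace SGaux

lemma s3_pos : 0 < Real.sqrt 3 := Real.sqrt_pos.mpr (by norm_num)

/-- corners of the big triangle -/
def corner : Fin 3 → ℝ × ℝ := ![(0, 0), (1, 0), (1 / 2, Real.sqrt 3 / 2)]

lemma corner0 : corner 0 = (0, 0) := rfl
lemma corner1 : corner 1 = (1, 0) := rfl
lemma corner2 : corner 2 = (1 / 2, Real.sqrt 3 / 2) := rfl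

lemma Tm0 : Tm 0 = T1 := rfl
lemma Tm1 : Tm 1 = T2 := rfl
lemma Tm2 : Tm 2 = T3 := rfl

lemma T1_inj : Function.Injective T1 := by
  intro p q h
  simp only [T1, Prod.mk.injEq] at h
  rw [Prod.ext_iff]; constructor <;> linarith [h.1, h.2]

lemma T2_inj : Function.Injective T2 := by
  intro p q h
  simp only [T2, Prod.mk.injEq] at h
  rw [Prod.ext_iff]; constructor <;> linarith [h.1, h.2]

lemma T3_inj : Function.Injective T3 := by
  intro p q h
  simp only [T3, Prod.mk.injEq] at h
  rw [Prod.ext_iff]; constructor <;> linarith [h.1, h.2]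

lemma Tm_inj (i : Fin 3) : Function.Injective (Tm i) := by
  fin_cases i
  · exact T1_inj
  · exact T2_inj
  · exact T3_inj

lemma V_zero : V 0 = {(0, 0), (1, 0), (1 / 2, Real.sqrt 3 / 2)} := rfl

lemma V_succ (n : ℕ) : V (n + 1) = T1 '' V n ∪ T2 '' V n ∪ T3 '' V n := rfl

lemma Tm_mem {n : ℕ} (i : Fin 3) {x : ℝ × ℝ} (hx : x ∈ V n) : Tm i x ∈ V (n + 1) := by
  rw [V_succ]
  fin_cases i
  · exact Or.inl (Or.inl ⟨x, hx, rfl⟩)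
  · exact Or.inl (Or.inr ⟨x, hx, rfl⟩)
  · exact Or.inr ⟨x, hx, rfl⟩

lemma V_finite (n : ℕ) : (V n).Finite := by
  induction n with
  | zero => exact (Set.finite_singleton _).insert _ |>.insert _
  | succ n ih => exact ((ih.image T1).union (ih.image T2)).union (ih.image T3)

lemma corner_fixed (i : Fin 3) : Tm i (corner i) = corner i := by
  fin_cases i
  · show T1 (0, 0) = (0, 0)
    norm_num [T1, Prod.ext_iff]
  · show T2 (1, 0) = (1, 0)
    norm_num [T2, Prod.ext_iff]
  · show T3 (1 / 2, Real.sqrt 3 / 2) = (1 / 2, Real.sqrt 3 / 2)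
    norm_num [T3, Prod.ext_iff]
    ring

lemma corner_mem (n : ℕ) (i : Fin 3) : corner i ∈ V n := by
  induction n with
  | zero =>
      fin_cases i
      · exact Or.inl rfl
      · exact Or.inr (Or.inl rfl)
      · exact Or.inr (Or.inr rfl)
  | succ n ih =>
      have := Tm_mem i ih
      rwa [corner_fixed] at this

lemma V_subset_succ (n : ℕ) : V n ⊆ V (n + 1) := by
  induction n with
  | zero =>
      intro p hp
      rcases hp with rfl | rfl | rfl
      · exact corner_mem 1 0
      · exact corner_mem 1 1
      · exact corner_mem 1 2
  | succ n ih =>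
      intro p hp
      rcases hp with (⟨q, hq, rfl⟩ | ⟨q, hq, rfl⟩) | ⟨q, hq, rfl⟩
      · exact Or.inl (Or.inl ⟨q, ih hq, rfl⟩)
      · exact Or.inl (Or.inr ⟨q, ih hq, rfl⟩)
      · exact Or.inr ⟨q, ih hq, rfl⟩

/-- Invariant: points lie in the closed triangle. -/
def SInv (p : ℝ × ℝ) : Prop :=
  0 ≤ p.2 ∧ p.2 ≤ Real.sqrt 3 * p.1 ∧ Real.sqrt 3 * p.1 + p.2 ≤ Real.sqrt 3

lemma inv_V : ∀ n, ∀ p ∈ V n, SInv p := by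
  intro n
  induction n with
  | zero =>
      intro p hp
      have hs := s3_pos
      rcases hp with rfl | rfl | rfl
      · refine ⟨le_refl _, ?_, ?_⟩
        · show (0:ℝ) ≤ Real.sqrt 3 * 0
          linarith
        · show Real.sqrt 3 * 0 + 0 ≤ Real.sqrt 3
          linarith
      · refine ⟨le_refl _, ?_, ?_⟩
        · show (0:ℝ) ≤ Real.sqrt 3 * 1
          linarith
        · show Real.sqrt 3 * 1 + 0 ≤ Real.sqrt 3
          linarith
      · refine ⟨by positivity, ?_, ?_⟩
        · show Real.sqrt 3 / 2 ≤ Real.sqrt 3 * (1 / 2)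
          linarith
        · show Real.sqrt 3 * (1 / 2) + Real.sqrt 3 / 2 ≤ Real.sqrt 3
          linarith
  | succ n ih =>
      intro p hp
      have hs := s3_pos
      rcases hp with (⟨q, hq, rfl⟩ | ⟨q, hq, rfl⟩) | ⟨q, hq, rfl⟩ <;>
        obtain ⟨h1, h2, h3⟩ := ih q hq
      · exact ⟨by simp [T1]; linarith, by simp [T1]; nlinarith, by simp [T1]; nlinarith⟩
      · exact ⟨by simp [T2]; linarith, by simp [T2]; nlinarith, by simp [T2]; nlinarith⟩
      · exact ⟨by simp [T3]; positivity, by simp [T3]; nlinarith, by simp [T3]; nlinarith⟩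

lemma junc {p q : ℝ × ℝ} (i j : Fin 3) (hij : i ≠ j) (hp : SInv p) (hq : SInv q)
    (h : Tm i p = Tm j q) : p = corner j := by
  obtain ⟨hp1, hp2, hp3⟩ := hp
  obtain ⟨hq1, hq2, hq3⟩ := hq
  have hs := s3_pos
  fin_cases i <;> fin_cases j
  · exact absurd rfl hij
  · -- i = 0, j = 1
    replace h : T1 p = T2 q := h
    simp only [T1, T2, Prod.mk.injEq] at h
    obtain ⟨h1, h2⟩ := h
    have ha : 0 ≤ q.1 := by nlinarith
    have hb : p.1 ≤ 1 := by nlinarith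
    have e1 : p.1 = 1 := by linarith
    have e2 : p.2 = 0 := by nlinarith
    show p = ((1 : ℝ), (0 : ℝ))
    exact Prod.ext_iff.mpr ⟨e1, e2⟩
  · -- i = 0, j = 2
    replace h : T1 p = T3 q := h
    simp only [T1, T3, Prod.mk.injEq] at h
    obtain ⟨h1, h2⟩ := h
    have e2 : p.2 = Real.sqrt 3 / 2 := by linarith
    have e1 : p.1 = 1 / 2 := by nlinarith
    show p = ((1 / 2 : ℝ), Real.sqrt 3 / 2)
    exact Prod.ext_iff.mpr ⟨e1, e2⟩
  · -- i = 1, j = 0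
    replace h : T2 p = T1 q := h
    simp only [T1, T2, Prod.mk.injEq] at h
    obtain ⟨h1, h2⟩ := h
    have ha : q.1 ≤ 1 := by nlinarith
    have hb : 0 ≤ p.1 := by nlinarith
    have e1 : p.1 = 0 := by linarith
    have e2 : p.2 = 0 := by nlinarith
    show p = ((0 : ℝ), (0 : ℝ))
    exact Prod.ext_iff.mpr ⟨e1, e2⟩
  · exact absurd rfl hij
  · -- i = 1, j = 2
    replace h : T2 p = T3 q := h
    simp only [T2, T3, Prod.mk.injEq] at h
    obtain ⟨h1, h2⟩ := h
    have e2 : p.2 = Real.sqrt 3 / 2 := by linarith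
    have e1 : p.1 = 1 / 2 := by nlinarith
    show p = ((1 / 2 : ℝ), Real.sqrt 3 / 2)
    exact Prod.ext_iff.mpr ⟨e1, e2⟩
  · -- i = 2, j = 0
    replace h : T3 p = T1 q := h
    simp only [T1, T3, Prod.mk.injEq] at h
    obtain ⟨h1, h2⟩ := h
    have e2 : p.2 = 0 := by linarith
    have hc : q.2 = Real.sqrt 3 / 2 := by linarith
    have e1 : p.1 = 0 := by nlinarith
    show p = ((0 : ℝ), (0 : ℝ))
    exact Prod.ext_iff.mpr ⟨e1, e2⟩
  · -- i = 2, j = 1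
    replace h : T3 p = T2 q := h
    simp only [T2, T3, Prod.mk.injEq] at h
    obtain ⟨h1, h2⟩ := h
    have e2 : p.2 = 0 := by linarith
    have hc : q.2 = Real.sqrt 3 / 2 := by linarith
    have e1 : p.1 = 1 := by nlinarith
    show p = ((1 : ℝ), (0 : ℝ))
    exact Prod.ext_iff.mpr ⟨e1, e2⟩
  · exact absurd rfl hij

lemma cell_subset : ∀ (n : ℕ) (w : Fin n → Fin 3), Cell n w ⊆ V n
  | 0, _ => le_refl _
  | (n + 1), w => by
      rintro x ⟨y, hy, rfl⟩
      exact Tm_mem _ (cell_subset n _ hy)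

lemma cell_cons {n : ℕ} (i : Fin 3) (w : Fin n → Fin 3) :
    Cell (n + 1) (Fin.cons i w) = Tm i '' Cell n w := by
  have h2 : (Fin.cons i w : Fin (n + 1) → Fin 3) ∘ Fin.succ = w := by
    funext j; simp
  have h0 : Cell (n + 1) (Fin.cons i w) =
      Tm ((Fin.cons i w : Fin (n + 1) → Fin 3) 0) ''
        Cell n ((Fin.cons i w : Fin (n + 1) → Fin 3) ∘ Fin.succ) := rfl
  rw [h0, h2, Fin.cons_zero]

lemma adj_mem {n : ℕ} {x y : ℝ × ℝ} (h : Adj n x y) : x ∈ V n ∧ y ∈ V n := by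
  obtain ⟨-, w, hx, hy⟩ := h
  exact ⟨cell_subset n w hx, cell_subset n w hy⟩

lemma adj_map {n : ℕ} (i : Fin 3) {x y : ℝ × ℝ} (h : Adj n x y) :
    Adj (n + 1) (Tm i x) (Tm i y) := by
  obtain ⟨hne, w, hx, hy⟩ := h
  exact ⟨fun hc => hne (Tm_inj i hc), Fin.cons i w,
    by rw [cell_cons]; exact ⟨x, hx, rfl⟩, by rw [cell_cons]; exact ⟨y, hy, rfl⟩⟩

lemma adj_of_succ {n : ℕ} {x y : ℝ × ℝ} (h : Adj (n + 1) x y) :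
    ∃ (i : Fin 3) (x' y' : ℝ × ℝ), Adj n x' y' ∧ x = Tm i x' ∧ y = Tm i y' := by
  obtain ⟨hne, w, hx, hy⟩ := h
  rw [show Cell (n + 1) w = Tm (w 0) '' Cell n (w ∘ Fin.succ) from rfl] at hx hy
  obtain ⟨x', hx', rfl⟩ := hx
  obtain ⟨y', hy', rfl⟩ := hy
  exact ⟨w 0, x', y', ⟨fun hc => hne (by rw [hc]), w ∘ Fin.succ, hx', hy'⟩, rfl, rfl⟩

instance adj_finite (n : ℕ) : Finite {p : (ℝ × ℝ) × (ℝ × ℝ) // Adj n p.1 p.2} := by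
  have hsub : {p : (ℝ × ℝ) × (ℝ × ℝ) | Adj n p.1 p.2} ⊆ (V n) ×ˢ (V n) := by
    intro p hp
    exact ⟨(adj_mem hp).1, (adj_mem hp).2⟩
  exact (((V_finite n).prod (V_finite n)).subset hsub).to_subtype

lemma Q_congr {n : ℕ} {g h : ℝ × ℝ → ℝ} (hgh : ∀ x ∈ V n, g x = h x) : Q n g = Q n h := by
  unfold Q
  congr 1
  apply tsum_congr
  rintro ⟨⟨x, y⟩, hadj⟩
  rw [hgh x (adj_mem hadj).1, hgh y (adj_mem hadj).2]

lemma corner_inj : Function.Injective corner := by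
  intro i j h
  fin_cases i <;> fin_cases j
  · rfl
  · exact absurd (show (0:ℝ) = 1 from congrArg Prod.fst h) (by norm_num)
  · exact absurd (show (0:ℝ) = 1 / 2 from congrArg Prod.fst h) (by norm_num)
  · exact absurd (show (1:ℝ) = 0 from congrArg Prod.fst h) (by norm_num)
  · rfl
  · exact absurd (show (1:ℝ) = 1 / 2 from congrArg Prod.fst h) (by norm_num)
  · exact absurd (show (1/2:ℝ) = 0 from congrArg Prod.fst h) (by norm_num)
  · exact absurd (show (1/2:ℝ) = 1 from congrArg Prod.fst h) (by norm_num)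
  · rfl

lemma mem_V0 {x : ℝ × ℝ} : x ∈ V 0 ↔ ∃ i, corner i = x := by
  constructor
  · intro hx
    rcases hx with rfl | rfl | rfl
    exacts [⟨0, rfl⟩, ⟨1, rfl⟩, ⟨2, rfl⟩]
  · rintro ⟨i, rfl⟩
    exact corner_mem 0 i

lemma adj_zero {x y : ℝ × ℝ} : Adj 0 x y ↔ x ≠ y ∧ x ∈ V 0 ∧ y ∈ V 0 := by
  constructor
  · rintro ⟨hne, w, hx, hy⟩
    exact ⟨hne, hx, hy⟩
  · rintro ⟨hne, hx, hy⟩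
    exact ⟨hne, fun i => i.elim0, hx, hy⟩

lemma Q_zero (f : ℝ × ℝ → ℝ) :
    Q 0 f = (f (corner 0) - f (corner 1)) ^ 2 + (f (corner 0) - f (corner 2)) ^ 2
      + (f (corner 1) - f (corner 2)) ^ 2 := by
  classical
  haveI : Fintype {p : (ℝ × ℝ) × (ℝ × ℝ) // Adj 0 p.1 p.2} := Fintype.ofFinite _
  set ψ : {q : Fin 3 × Fin 3 // q.1 ≠ q.2} → {p : (ℝ × ℝ) × (ℝ × ℝ) // Adj 0 p.1 p.2} :=
    fun q => ⟨(corner q.val.1, corner q.val.2),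
      adj_zero.mpr ⟨fun hc => q.prop (corner_inj hc), corner_mem 0 _, corner_mem 0 _⟩⟩
    with hψ
  have hbij : Function.Bijective ψ := by
    constructor
    · rintro ⟨⟨i, j⟩, hij⟩ ⟨⟨i', j'⟩, hij'⟩ h
      simp only [hψ, Subtype.mk.injEq, Prod.mk.injEq] at h
      exact Subtype.ext (Prod.ext_iff.mpr ⟨corner_inj h.1, corner_inj h.2⟩)
    · rintro ⟨⟨x, y⟩, hadj⟩
      obtain ⟨hne, hx, hy⟩ := adj_zero.mp hadj
      obtain ⟨i, rfl⟩ := mem_V0.mp hx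
      obtain ⟨j, rfl⟩ := mem_V0.mp hy
      exact ⟨⟨(i, j), fun hc => hne (congrArg corner hc)⟩, rfl⟩
  have e1 : ∑' p : {p : (ℝ × ℝ) × (ℝ × ℝ) // Adj 0 p.1 p.2}, (f p.val.1 - f p.val.2) ^ 2
      = ∑' q : {q : Fin 3 × Fin 3 // q.1 ≠ q.2},
          (f (corner q.val.1) - f (corner q.val.2)) ^ 2 :=
    ((Equiv.ofBijective ψ hbij).tsum_eq
      (fun p : {p : (ℝ × ℝ) × (ℝ × ℝ) // Adj 0 p.1 p.2} => (f p.val.1 - f p.val.2) ^ 2)).symm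
  have e2 : ∑' q : {q : Fin 3 × Fin 3 // q.1 ≠ q.2},
        (f (corner q.val.1) - f (corner q.val.2)) ^ 2
      = ∑' q : Fin 3 × Fin 3, Set.indicator {q : Fin 3 × Fin 3 | q.1 ≠ q.2}
          (fun q => (f (corner q.1) - f (corner q.2)) ^ 2) q :=
    tsum_subtype {q : Fin 3 × Fin 3 | q.1 ≠ q.2} (fun q => (f (corner q.1) - f (corner q.2)) ^ 2)
  have e3 : ∑' q : Fin 3 × Fin 3, Set.indicator {q : Fin 3 × Fin 3 | q.1 ≠ q.2}
        (fun q => (f (corner q.1) - f (corner q.2)) ^ 2) q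
      = ∑ q : Fin 3 × Fin 3, Set.indicator {q : Fin 3 × Fin 3 | q.1 ≠ q.2}
          (fun q => (f (corner q.1) - f (corner q.2)) ^ 2) q :=
    tsum_fintype _
  have e4 : ∑ q : Fin 3 × Fin 3, Set.indicator {q : Fin 3 × Fin 3 | q.1 ≠ q.2}
        (fun q => (f (corner q.1) - f (corner q.2)) ^ 2) q
      = ∑ q : Fin 3 × Fin 3, (f (corner q.1) - f (corner q.2)) ^ 2 := by
    refine Finset.sum_congr rfl fun q _ => ?_
    by_cases hc : q.1 = q.2
    · simp [Set.indicator, hc]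
    · simp [Set.indicator, hc]
  have total : Q 0 f = 1 / 2 * ∑ q : Fin 3 × Fin 3, (f (corner q.1) - f (corner q.2)) ^ 2 :=
    congrArg (fun t => 1 / 2 * t) (e1.trans (e2.trans (e3.trans e4)))
  rw [total, Fintype.sum_prod_type]
  simp only [Fin.sum_univ_three]
  ring

lemma Q_succ (n : ℕ) (g : ℝ × ℝ → ℝ) : Q (n + 1) g = ∑ i : Fin 3, Q n (g ∘ Tm i) := by
  classical
  haveI : Fintype {p : (ℝ × ℝ) × (ℝ × ℝ) // Adj n p.1 p.2} := Fintype.ofFinite _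
  haveI : Fintype {p : (ℝ × ℝ) × (ℝ × ℝ) // Adj (n + 1) p.1 p.2} :=
    @Fintype.ofFinite _ (adj_finite (n + 1))
  set φ : Fin 3 × {p : (ℝ × ℝ) × (ℝ × ℝ) // Adj n p.1 p.2} →
      {p : (ℝ × ℝ) × (ℝ × ℝ) // Adj (n + 1) p.1 p.2} :=
    fun q => ⟨(Tm q.1 q.2.val.1, Tm q.1 q.2.val.2), adj_map q.1 q.2.prop⟩ with hφ
  have hbij : Function.Bijective φ := by
    constructor
    · rintro ⟨i, ⟨⟨x, y⟩, hxy⟩⟩ ⟨j, ⟨⟨x', y'⟩, hxy'⟩⟩ h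
      simp only [hφ, Subtype.mk.injEq, Prod.mk.injEq] at h
      obtain ⟨h1, h2⟩ := h
      by_cases hij : i = j
      · subst hij
        refine Prod.ext_iff.mpr ⟨rfl, Subtype.ext (Prod.ext_iff.mpr ⟨Tm_inj i h1, Tm_inj i h2⟩)⟩
      · exfalso
        have hx := inv_V n x (adj_mem hxy).1
        have hy := inv_V n y (adj_mem hxy).2
        have hx' := inv_V n x' (adj_mem hxy').1
        have hy' := inv_V n y' (adj_mem hxy').2
        have j1 := junc i j hij hx hx' h1
        have j2 := junc i j hij hy hy' h2
        exact hxy.1 (j1.trans j2.symm)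
    · rintro ⟨⟨x, y⟩, hadj⟩
      obtain ⟨i, x', y', h', rfl, rfl⟩ := adj_of_succ hadj
      exact ⟨⟨i, ⟨(x', y'), h'⟩⟩, rfl⟩
  have e1 : ∑' p : {p : (ℝ × ℝ) × (ℝ × ℝ) // Adj (n + 1) p.1 p.2}, (g p.val.1 - g p.val.2) ^ 2
      = ∑' q : Fin 3 × {p : (ℝ × ℝ) × (ℝ × ℝ) // Adj n p.1 p.2},
          (g (Tm q.1 q.2.val.1) - g (Tm q.1 q.2.val.2)) ^ 2 :=
    ((Equiv.ofBijective φ hbij).tsum_eq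
      (fun p : {p : (ℝ × ℝ) × (ℝ × ℝ) // Adj (n + 1) p.1 p.2} =>
        (g p.val.1 - g p.val.2) ^ 2)).symm
  have e2 : ∑' q : Fin 3 × {p : (ℝ × ℝ) × (ℝ × ℝ) // Adj n p.1 p.2},
        (g (Tm q.1 q.2.val.1) - g (Tm q.1 q.2.val.2)) ^ 2
      = ∑ q : Fin 3 × {p : (ℝ × ℝ) × (ℝ × ℝ) // Adj n p.1 p.2},
        (g (Tm q.1 q.2.val.1) - g (Tm q.1 q.2.val.2)) ^ 2 := tsum_fintype _
  have total : Q (n + 1) g = 1 / 2 * ∑ q : Fin 3 × {p : (ℝ × ℝ) × (ℝ × ℝ) // Adj n p.1 p.2},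
      (g (Tm q.1 q.2.val.1) - g (Tm q.1 q.2.val.2)) ^ 2 :=
    congrArg (fun t => 1 / 2 * t) (e1.trans e2)
  rw [total, Fintype.sum_prod_type, Finset.mul_sum]
  refine Finset.sum_congr rfl fun i _ => ?_
  have e3 : Q n (g ∘ Tm i) = 1 / 2 * ∑ a : {p : (ℝ × ℝ) × (ℝ × ℝ) // Adj n p.1 p.2},
      (g (Tm i a.val.1) - g (Tm i a.val.2)) ^ 2 :=
    congrArg (fun t => 1 / 2 * t)
      (tsum_fintype (fun a : {p : (ℝ × ℝ) × (ℝ × ℝ) // Adj n p.1 p.2} =>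
        (g (Tm i a.val.1) - g (Tm i a.val.2)) ^ 2))
  rw [e3]

lemma Q_one (g : ℝ × ℝ → ℝ) :
    Q 1 g =
      (g (0, 0) - g (1 / 2, 0)) ^ 2 + (g (0, 0) - g (1 / 4, Real.sqrt 3 / 4)) ^ 2
        + (g (1 / 2, 0) - g (1 / 4, Real.sqrt 3 / 4)) ^ 2
      + ((g (1 / 2, 0) - g (1, 0)) ^ 2 + (g (1 / 2, 0) - g (3 / 4, Real.sqrt 3 / 4)) ^ 2
        + (g (1, 0) - g (3 / 4, Real.sqrt 3 / 4)) ^ 2)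
      + ((g (1 / 4, Real.sqrt 3 / 4) - g (3 / 4, Real.sqrt 3 / 4)) ^ 2
        + (g (1 / 4, Real.sqrt 3 / 4) - g (1 / 2, Real.sqrt 3 / 2)) ^ 2
        + (g (3 / 4, Real.sqrt 3 / 4) - g (1 / 2, Real.sqrt 3 / 2)) ^ 2) := by
  rw [Q_succ 0 g, Fin.sum_univ_three, Q_zero, Q_zero, Q_zero]
  have e00 : Tm 0 (corner 0) = ((0 : ℝ), (0 : ℝ)) := by
    show T1 (0, 0) = ((0 : ℝ), (0 : ℝ)); norm_num [T1, Prod.ext_iff]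
  have e01 : Tm 0 (corner 1) = ((1 / 2 : ℝ), (0 : ℝ)) := by
    show T1 (1, 0) = ((1 / 2 : ℝ), (0 : ℝ)); norm_num [T1, Prod.ext_iff]
  have e02 : Tm 0 (corner 2) = ((1 / 4 : ℝ), Real.sqrt 3 / 4) := by
    show T1 (1 / 2, Real.sqrt 3 / 2) = ((1 / 4 : ℝ), Real.sqrt 3 / 4)
    norm_num [T1, Prod.ext_iff]; ring
  have e10 : Tm 1 (corner 0) = ((1 / 2 : ℝ), (0 : ℝ)) := by
    show T2 (0, 0) = ((1 / 2 : ℝ), (0 : ℝ)); norm_num [T2, Prod.ext_iff]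
  have e11 : Tm 1 (corner 1) = ((1 : ℝ), (0 : ℝ)) := by
    show T2 (1, 0) = ((1 : ℝ), (0 : ℝ)); norm_num [T2, Prod.ext_iff]
  have e12 : Tm 1 (corner 2) = ((3 / 4 : ℝ), Real.sqrt 3 / 4) := by
    show T2 (1 / 2, Real.sqrt 3 / 2) = ((3 / 4 : ℝ), Real.sqrt 3 / 4)
    norm_num [T2, Prod.ext_iff]; ring
  have e20 : Tm 2 (corner 0) = ((1 / 4 : ℝ), Real.sqrt 3 / 4) := by
    show T3 (0, 0) = ((1 / 4 : ℝ), Real.sqrt 3 / 4); norm_num [T3, Prod.ext_iff]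
  have e21 : Tm 2 (corner 1) = ((3 / 4 : ℝ), Real.sqrt 3 / 4) := by
    show T3 (1, 0) = ((3 / 4 : ℝ), Real.sqrt 3 / 4); norm_num [T3, Prod.ext_iff]
  have e22 : Tm 2 (corner 2) = ((1 / 2 : ℝ), Real.sqrt 3 / 2) := by
    show T3 (1 / 2, Real.sqrt 3 / 2) = ((1 / 2 : ℝ), Real.sqrt 3 / 2)
    norm_num [T3, Prod.ext_iff]; ring
  simp only [Function.comp_apply, e00, e01, e02, e10, e11, e12, e20, e21, e22]

lemma mem_V0_a : ((0 : ℝ), (0 : ℝ)) ∈ V 0 := Or.inl rfl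
lemma mem_V0_b : ((1 : ℝ), (0 : ℝ)) ∈ V 0 := Or.inr (Or.inl rfl)
lemma mem_V0_c : ((1 / 2 : ℝ), Real.sqrt 3 / 2) ∈ V 0 := Or.inr (Or.inr rfl)

lemma key : ∀ n : ℕ, ∀ f : ℝ × ℝ → ℝ,
    (∀ g : ℝ × ℝ → ℝ, (∀ x ∈ V n, g x = f x) → 3 / 5 * Q n f ≤ Q (n + 1) g) ∧
    (∃ g : ℝ × ℝ → ℝ, (∀ x ∈ V n, g x = f x) ∧ Q (n + 1) g = 3 / 5 * Q n f) := by
  intro n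
  induction n with
  | zero =>
      intro f
      have hs := s3_pos
      have hQ0 : Q 0 f = (f (0, 0) - f (1, 0)) ^ 2 + (f (0, 0) - f (1 / 2, Real.sqrt 3 / 2)) ^ 2
          + (f (1, 0) - f (1 / 2, Real.sqrt 3 / 2)) ^ 2 := by
        rw [Q_zero, corner0, corner1, corner2]
      -- distinctness facts
      have d1 : ((0 : ℝ), (0 : ℝ)) ≠ (1 / 2, 0) := by
        intro hc; exact absurd (congrArg Prod.fst hc) (by norm_num)
      have d2 : ((0 : ℝ), (0 : ℝ)) ≠ (1 / 4, Real.sqrt 3 / 4) := by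
        intro hc; exact absurd (congrArg Prod.fst hc) (by norm_num)
      have d3 : ((0 : ℝ), (0 : ℝ)) ≠ (3 / 4, Real.sqrt 3 / 4) := by
        intro hc; exact absurd (congrArg Prod.fst hc) (by norm_num)
      have d4 : ((1 : ℝ), (0 : ℝ)) ≠ (1 / 2, 0) := by
        intro hc; exact absurd (congrArg Prod.fst hc) (by norm_num)
      have d5 : ((1 : ℝ), (0 : ℝ)) ≠ (1 / 4, Real.sqrt 3 / 4) := by
        intro hc; exact absurd (congrArg Prod.fst hc) (by norm_num)
      have d6 : ((1 : ℝ), (0 : ℝ)) ≠ (3 / 4, Real.sqrt 3 / 4) := by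
        intro hc; exact absurd (congrArg Prod.fst hc) (by norm_num)
      have d7 : ((1 / 2 : ℝ), Real.sqrt 3 / 2) ≠ (1 / 2, 0) := by
        intro hc
        have : Real.sqrt 3 / 2 = 0 := congrArg Prod.snd hc
        nlinarith
      have d8 : ((1 / 2 : ℝ), Real.sqrt 3 / 2) ≠ (1 / 4, Real.sqrt 3 / 4) := by
        intro hc; exact absurd (congrArg Prod.fst hc) (by norm_num)
      have d9 : ((1 / 2 : ℝ), Real.sqrt 3 / 2) ≠ (3 / 4, Real.sqrt 3 / 4) := by
        intro hc; exact absurd (congrArg Prod.fst hc) (by norm_num)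
      have d10 : ((1 / 2 : ℝ), (0 : ℝ)) ≠ (1 / 4, Real.sqrt 3 / 4) := by
        intro hc; exact absurd (congrArg Prod.fst hc) (by norm_num)
      have d11 : ((3 / 4 : ℝ), Real.sqrt 3 / 4) ≠ (1 / 2, 0) := by
        intro hc; exact absurd (congrArg Prod.fst hc) (by norm_num)
      have d12 : ((3 / 4 : ℝ), Real.sqrt 3 / 4) ≠ (1 / 4, Real.sqrt 3 / 4) := by
        intro hc; exact absurd (congrArg Prod.fst hc) (by norm_num)
      refine ⟨?_, ?_⟩
      · intro g hg
        have hA := hg _ mem_V0_a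
        have hB := hg _ mem_V0_b
        have hC := hg _ mem_V0_c
        rw [Q_one g, hA, hB, hC, hQ0]
        nlinarith [sq_nonneg (5 * g (1/2, 0) - (2 * f (0,0) + 2 * f (1,0) + f (1/2, Real.sqrt 3/2))),
          sq_nonneg (5 * g (3/4, Real.sqrt 3/4) - (f (0,0) + 2 * f (1,0) + 2 * f (1/2, Real.sqrt 3/2))),
          sq_nonneg (5 * g (1/4, Real.sqrt 3/4) - (2 * f (0,0) + f (1,0) + 2 * f (1/2, Real.sqrt 3/2))),
          sq_nonneg (5 * (g (1/2, 0) - g (3/4, Real.sqrt 3/4)) - (f (0,0) - f (1/2, Real.sqrt 3/2))),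
          sq_nonneg (5 * (g (1/2, 0) - g (1/4, Real.sqrt 3/4)) - (f (1,0) - f (1/2, Real.sqrt 3/2))),
          sq_nonneg (5 * (g (3/4, Real.sqrt 3/4) - g (1/4, Real.sqrt 3/4)) - (f (1,0) - f (0,0)))]
      · classical
        refine ⟨fun z =>
          if z = ((1 / 2 : ℝ), (0 : ℝ)) then
            (2 * f ((0:ℝ), (0:ℝ)) + 2 * f ((1:ℝ), (0:ℝ)) + f ((1/2:ℝ), Real.sqrt 3 / 2)) / 5
          else if z = ((1 / 4 : ℝ), Real.sqrt 3 / 4) then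
            (2 * f ((0:ℝ), (0:ℝ)) + f ((1:ℝ), (0:ℝ)) + 2 * f ((1/2:ℝ), Real.sqrt 3 / 2)) / 5
          else if z = ((3 / 4 : ℝ), Real.sqrt 3 / 4) then
            (f ((0:ℝ), (0:ℝ)) + 2 * f ((1:ℝ), (0:ℝ)) + 2 * f ((1/2:ℝ), Real.sqrt 3 / 2)) / 5
          else f z, ?_, ?_⟩
        · intro x hx
          rcases hx with rfl | rfl | rfl
          · simp only [if_neg d1, if_neg d2, if_neg d3]
          · simp only [if_neg d4, if_neg d5, if_neg d6]
          · simp only [if_neg d7, if_neg d8, if_neg d9]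
        · rw [Q_one, hQ0]
          rw [if_neg d1, if_neg d2, if_neg d3, if_neg d4, if_neg d5, if_neg d6,
            if_neg d7, if_neg d8, if_neg d9]
          rw [if_pos rfl]
          rw [if_neg (Ne.symm d10), if_pos rfl, if_neg d11, if_neg d12, if_pos rfl]
          ring
  | succ n ih =>
      intro f
      constructor
      · intro g hg
        rw [Q_succ (n + 1) g, Q_succ n f, Finset.mul_sum]
        refine Finset.sum_le_sum fun i _ => ?_
        exact (ih (f ∘ Tm i)).1 (g ∘ Tm i) (fun x hx => hg (Tm i x) (Tm_mem i hx))
      · choose gg hgg1 hgg2 using fun i => (ih (f ∘ Tm i)).2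
        classical
        set G : ℝ × ℝ → ℝ := fun z =>
          if z ∈ Tm 0 '' V (n + 1) then gg 0 (Function.invFun (Tm 0) z)
          else if z ∈ Tm 1 '' V (n + 1) then gg 1 (Function.invFun (Tm 1) z)
          else if z ∈ Tm 2 '' V (n + 1) then gg 2 (Function.invFun (Tm 2) z)
          else 0 with hGdef
        have main : ∀ (j i : Fin 3) (q p : ℝ × ℝ), q ∈ V (n + 1) → p ∈ V (n + 1) →
            Tm j q = Tm i p → gg j q = gg i p := by
          intro j i q p hq hp hji
          by_cases hij : j = i
          · subst hij
            rw [Tm_inj j hji]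
          · have hcq : q = corner i := junc j i hij (inv_V _ q hq) (inv_V _ p hp) hji
            have hcp : p = corner j :=
              junc i j (Ne.symm hij) (inv_V _ p hp) (inv_V _ q hq) hji.symm
            subst hcq
            subst hcp
            rw [hgg1 j (corner i) (corner_mem n i), hgg1 i (corner j) (corner_mem n j)]
            exact congrArg f hji
        have hGT : ∀ (i : Fin 3) (p : ℝ × ℝ), p ∈ V (n + 1) → G (Tm i p) = gg i p := by
          intro i p hp
          simp only [hGdef]
          by_cases hb0 : Tm i p ∈ Tm 0 '' V (n + 1)
          · obtain ⟨q, hq, hqe⟩ := hb0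
            rw [if_pos ⟨q, hq, hqe⟩]
            have hinv : Function.invFun (Tm 0) (Tm i p) = q := by
              rw [← hqe]
              exact Function.leftInverse_invFun (Tm_inj 0) q
            rw [hinv]
            exact main 0 i q p hq hp hqe
          · rw [if_neg hb0]
            by_cases hb1 : Tm i p ∈ Tm 1 '' V (n + 1)
            · obtain ⟨q, hq, hqe⟩ := hb1
              rw [if_pos ⟨q, hq, hqe⟩]
              have hinv : Function.invFun (Tm 1) (Tm i p) = q := by
                rw [← hqe]
                exact Function.leftInverse_invFun (Tm_inj 1) q
              rw [hinv]
              exact main 1 i q p hq hp hqe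
            · rw [if_neg hb1]
              by_cases hb2 : Tm i p ∈ Tm 2 '' V (n + 1)
              · obtain ⟨q, hq, hqe⟩ := hb2
                rw [if_pos ⟨q, hq, hqe⟩]
                have hinv : Function.invFun (Tm 2) (Tm i p) = q := by
                  rw [← hqe]
                  exact Function.leftInverse_invFun (Tm_inj 2) q
                rw [hinv]
                exact main 2 i q p hq hp hqe
              · exfalso
                have hmem : Tm i p ∈ Tm i '' V (n + 1) := ⟨p, hp, rfl⟩
                fin_cases i
                · exact hb0 hmem
                · exact hb1 hmem
                · exact hb2 hmem
        refine ⟨G, ?_, ?_⟩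
        · intro x hx
          rcases hx with (⟨q, hq, rfl⟩ | ⟨q, hq, rfl⟩) | ⟨q, hq, rfl⟩
          · exact (hGT 0 q (V_subset_succ n hq)).trans (hgg1 0 q hq)
          · exact (hGT 1 q (V_subset_succ n hq)).trans (hgg1 1 q hq)
          · exact (hGT 2 q (V_subset_succ n hq)).trans (hgg1 2 q hq)
        · rw [Q_succ (n + 1) G, Q_succ n f, Finset.mul_sum]
          refine Finset.sum_congr rfl fun i _ => ?_
          rw [Q_congr (n := n + 1) (g := G ∘ Tm i) (h := gg i) (fun x hx => hGT i x hx)]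
          exact hgg2 i

end SGaux

theorem stmt_12 (n : ℕ) (f : ℝ × ℝ → ℝ) :
    IsLeast {q : ℝ | ∃ g : ℝ × ℝ → ℝ, (∀ x ∈ V n, g x = f x) ∧ q = Q (n + 1) g}
      ((3 / 5) * Q n f) ∧
    IsLeast {q : ℝ | ∃ g : ℝ × ℝ → ℝ, (∀ x ∈ V n, g x = f x) ∧ q = En (n + 1) g}
      (En n f) := by
  obtain ⟨low, G, hG1, hG2⟩ := SGaux.key n f
  have hpow : (0 : ℝ) < (5 / 3 : ℝ) ^ (n + 1) := by positivity
  constructor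
  · constructor
    · exact ⟨G, hG1, hG2.symm⟩
    · rintro q ⟨g, hg, rfl⟩
      exact low g hg
  · constructor
    · refine ⟨G, hG1, ?_⟩
      show En n f = (5 / 3 : ℝ) ^ (n + 1) * Q (n + 1) G
      rw [hG2]
      show (5 / 3 : ℝ) ^ n * Q n f = _
      rw [pow_succ]
      ring
    · rintro q ⟨g, hg, rfl⟩
      show En n f ≤ En (n + 1) g
      have h := low g hg
      show (5 / 3 : ℝ) ^ n * Q n f ≤ (5 / 3 : ℝ) ^ (n + 1) * Q (n + 1) g
      calc (5 / 3 : ℝ) ^ n * Q n f = (5 / 3 : ℝ) ^ (n + 1) * (3 / 5 * Q n f) := by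
            rw [pow_succ]; ring
        _ ≤ (5 / 3 : ℝ) ^ (n + 1) * Q (n + 1) g := mul_le_mul_of_nonneg_left h hpow.le
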